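/- Let 1 ≤ s ≤ n, let S be an s-dimensional subspace of F_q^{2n}, and let P be a 1-dimensional subspace with P ≤ S. Define χ^i_P on chambers as usual (value q^i if P ≤ C_n, P ≰ C_{n-i}; value -1 if P ≤ C_{n+i}, P ≰ C_n; 0 otherwise) and v_S(C) = q^{s(2n-s)-n} if C_s = S, 1 if S ∩ C_{2n-s} = {0}, 0 otherwise. Then v_Sᵀ χ^i_P = 0 for every i ∈ {1,...,n}. -/

import Mathlib

open Module Finset
open scoped Classical

/-- A chamber of a `c`-dimensional vector space, encoded as an increasing chain
`f : ℕ → Submodule K V` with `finrank (f i) = i` for `i ≤ c` and `f i = ⊤` for `i ≥ c`. -/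
def IsChamber (K : Type*) {V : Type*} [Field K] [AddCommGroup V] [Module K V]
    (c : ℕ) (f : ℕ → Submodule K V) : Prop :=
  Monotone f ∧ (∀ i ≤ c, Module.finrank K (f i) = i) ∧ ∀ i, c ≤ i → f i = ⊤

/-- The type of chambers of `V`, `dim V = c`. -/
abbrev Chamber (K V : Type*) [Field K] [AddCommGroup V] [Module K V] (c : ℕ) :=
  {f : ℕ → Submodule K V // IsChamber K c f}

/-- Two chambers are opposite if `C_i ∩ D_{c-i} = 0` for `1 ≤ i ≤ c - 1`. -/
def OppositeChambers (K : Type*) {V : Type*} [Field K] [AddCommGroup V] [Module K V]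
    (c : ℕ) (f g : ℕ → Submodule K V) : Prop :=
  ∀ i, 1 ≤ i → i ≤ c - 1 → f i ⊓ g (c - i) = ⊥

/-- `z_c(q) = ∏_{i=1}^c (q^i - 1) / (q-1)`, the number of chambers of `𝔽_q^c`. -/
def zNat (q c : ℕ) : ℕ := (∏ i ∈ Finset.Icc 1 c, (q ^ i - 1)) / (q - 1) ^ c

/-- The Gaussian binomial coefficient `[b choose a]_q`. -/
def gaussNat (q b a : ℕ) : ℕ :=
  (∏ i ∈ Finset.Icc 1 a, (q ^ (b - a + i) - 1)) / ∏ i ∈ Finset.Icc 1 a, (q ^ i - 1)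

/-!
Expanding the product, `v_Sᵀ χ^i_P = q^(s(2n-s)-n+i) · #A - #B` with
`A = {C : C_s = S, P ≰ C_(n-i)}` and `B = {C : S ⊓ C_(2n-s) = 0, P ≤ C_(n+i)}`.
Fixing one member `W = C_w` splits a chamber into a chamber of `W` and one of `V ⧸ W`, so
`#A = #{chambers of S with P ≰ C_(n-i)} · z_(2n-s)`, while `B` fibres over the
`q^(s(2n-s))` complements `W = C_(2n-s)` of `S`, each fibre being `z_(2n-s)` times the number
of chambers of the `s`-space `V ⧸ W` whose `(s+i-n)`-th member contains the image of `P`.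
Both counts come from one formula: among the `z_m` chambers of an `m`-space, exactly
`q^t z_m [m-t]_q / [m]_q` have `t`-th member avoiding a given point (induction on `t`,
splitting at the first member); the two terms then cancel by
`[s]_q = [n-i]_q + q^(n-i) [s+i-n]_q`.
-/

universe u

def qAnalog (q m : ℕ) : ℕ := ∑ j ∈ range m, q ^ j

def qFactorial (q m : ℕ) : ℕ := ∏ j ∈ range m, qAnalog q (j + 1)

theorem qAnalog_add (q a b : ℕ) : qAnalog q (a + b) = qAnalog q a + q ^ a * qAnalog q b := by
  simp only [qAnalog, sum_range_add, pow_add, mul_sum]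

theorem qAnalog_pos {q m : ℕ} (hm : 0 < m) : 0 < qAnalog q m :=
  sum_pos' (fun _ _ => Nat.zero_le _) ⟨0, mem_range.mpr hm, by simp⟩

theorem qFactorial_succ (q m : ℕ) : qFactorial q (m + 1) = qFactorial q m * qAnalog q (m + 1) :=
  prod_range_succ _ _

theorem qAnalog_succ (q m : ℕ) : qAnalog q (m + 1) = q * qAnalog q m + 1 := by
  rw [add_comm m, qAnalog_add]; simp [qAnalog, add_comm]

theorem card_subtype_eq_sum_card_fiber {α β : Type*} [Finite α] {p : α → Prop}
    {r : β → Prop} [Fintype {b // r b}] (f : α → β) (hf : ∀ a, p a → r (f a)) :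
    Nat.card {a // p a} = ∑ b : {b // r b}, Nat.card {a // f a = b.1 ∧ p a} := by
  rw [← Nat.card_sigma]
  refine Nat.card_congr
    { toFun a := ⟨⟨f a, hf a a.2⟩, a.1, rfl, a.2⟩
      invFun x := ⟨x.2.1, x.2.2.2⟩
      left_inv _ := rfl
      right_inv x := Sigma.subtype_ext (Subtype.ext x.2.2.1) rfl }

namespace Submodule
variable {K V : Type*} [Field K] [AddCommGroup V] [Module K V] {W P X : Submodule K V}

theorem comap_subtype_le_comap_subtype_iff (h : P ≤ W) :
    P.comap W.subtype ≤ X.comap W.subtype ↔ P ≤ X := by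
  rw [comap_subtype_le_iff, inf_eq_right.mpr h, le_inf_iff, and_iff_right h]

theorem map_mkQ_le_map_mkQ_iff (h : W ≤ X) : P.map W.mkQ ≤ X.map W.mkQ ↔ P ≤ X := by
  rw [map_le_iff_le_comap, comap_map_mkQ, sup_eq_right.mpr h]

variable [FiniteDimensional K V]

instance [Finite K] : Finite (Submodule K V) :=
  have : Finite V := Module.finite_of_finite K
  Finite.of_injective _ SetLike.coe_injective

theorem finrank_map_mkQ_add_finrank (h : W ≤ X) :
    finrank K (X.map W.mkQ) + finrank K W = finrank K X := by
  have := LinearMap.finrank_range_add_finrank_ker (W.mkQ.domRestrict X)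
  rwa [LinearMap.range_domRestrict, LinearMap.ker_domRestrict, ker_mkQ,
    (comapSubtypeEquivOfLe h).finrank_eq] at this

theorem finrank_comap_mkQ (W : Submodule K V) (b : Submodule K (V ⧸ W)) :
    finrank K (b.comap W.mkQ) = finrank K b + finrank K W := by
  rw [← finrank_map_mkQ_add_finrank (le_comap_mkQ W b),
    map_comap_eq_of_surjective W.mkQ_surjective]

theorem finrank_map_mkQ_of_disjoint (h : Disjoint W P) :
    finrank K (P.map W.mkQ) = finrank K P := by
  have hsup := finrank_map_mkQ_add_finrank (le_sup_left : W ≤ W ⊔ P)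
  rw [map_sup, mkQ_map_self, bot_sup_eq] at hsup
  have hinf := finrank_sup_add_finrank_inf_eq W P
  rw [h.eq_bot, finrank_bot] at hinf
  omega

end Submodule

namespace Chamber
variable {K V : Type*} [Field K] [AddCommGroup V] [Module K V] {c : ℕ}

theorem monotone (C : Chamber K V c) : Monotone C.1 := C.2.1

theorem finrank_apply (C : Chamber K V c) {j : ℕ} (h : j ≤ c) : finrank K (C.1 j) = j :=
  C.2.2.1 j h

theorem apply_of_le (C : Chamber K V c) {j : ℕ} (h : c ≤ j) : C.1 j = ⊤ := C.2.2.2 j h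

theorem finrank_eq (C : Chamber K V c) : finrank K V = c := by
  rw [← finrank_top, ← C.apply_of_le le_rfl, C.finrank_apply le_rfl]

variable [FiniteDimensional K V]

theorem apply_zero (C : Chamber K V c) : C.1 0 = ⊥ :=
  Submodule.finrank_eq_zero.mp (C.finrank_apply c.zero_le)

instance [Finite K] : Finite (Chamber K V c) := by
  refine Finite.of_injective (fun C : Chamber K V c => fun j : Fin (c + 1) => C.1 j)
    fun C D h => Subtype.ext (funext fun j => ?_)
  rcases le_or_gt j c with hj | hj
  · exact congrFun h ⟨j, Nat.lt_succ_of_le hj⟩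
  · rw [C.apply_of_le hj.le, D.apply_of_le hj.le]

theorem card_eq_one_of_le_one (hc : c ≤ 1) (hV : finrank K V = c) :
    Nat.card (Chamber K V c) = 1 := by
  refine Nat.card_eq_one_iff_unique.mpr ⟨⟨fun C D => Subtype.ext (funext fun j => ?_)⟩, ?_⟩
  · rcases Nat.eq_zero_or_pos j with rfl | hj
    · rw [C.apply_zero, D.apply_zero]
    · rw [C.apply_of_le (by omega), D.apply_of_le (by omega)]
  · refine ⟨⟨fun j => if j < c then ⊥ else ⊤, fun a b hab => ?_, fun j hj => ?_,
      fun j hj => ?_⟩⟩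
    · dsimp only
      split_ifs <;> first | exact bot_le | exact le_top | omega
    · beta_reduce
      by_cases hjc : j < c
      · rw [if_pos hjc, finrank_bot]; omega
      · rw [if_neg hjc, finrank_top]; omega
    · exact if_neg (by omega)

variable {W P : Submodule K V} {w m k : ℕ}

theorem le_of_finrank_eq (C : Chamber K V m) (hW : finrank K W = w) : w ≤ m :=
  hW ▸ C.finrank_eq ▸ Submodule.finrank_le W

def restrict (C : Chamber K V m) (hC : C.1 w = W) (hW : finrank K W = w) : Chamber K W w :=
  ⟨fun j => (C.1 j).comap W.subtype, fun _ _ hab => Submodule.comap_mono (C.monotone hab),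
    fun j hj => by
      have hwm := C.le_of_finrank_eq hW
      rw [(Submodule.comapSubtypeEquivOfLe (hC ▸ C.monotone hj)).finrank_eq,
        C.finrank_apply (hj.trans hwm)],
    fun j hj => Submodule.comap_subtype_eq_top.mpr (hC ▸ C.monotone hj)⟩

def quotient (C : Chamber K V m) (hC : C.1 w = W) (hW : finrank K W = w) :
    Chamber K (V ⧸ W) (m - w) :=
  ⟨fun j => (C.1 (w + j)).map W.mkQ, fun _ _ hab => Submodule.map_mono (C.monotone (by omega)),
    fun j hj => by
      beta_reduce
      have hwm := C.le_of_finrank_eq hW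
      have hWle : W ≤ C.1 (w + j) := hC ▸ C.monotone (Nat.le_add_right w j)
      have := Submodule.finrank_map_mkQ_add_finrank hWle
      rw [hW, C.finrank_apply (by omega)] at this
      omega,
    fun j hj => by
      beta_reduce
      rw [C.apply_of_le (by omega), Submodule.map_top, Submodule.range_mkQ]⟩

def glue (a : Chamber K W w) (b : Chamber K (V ⧸ W) (m - w)) (hW : finrank K W = w)
    (hV : finrank K V = m) : Chamber K V m :=
  ⟨fun j => if j ≤ w then (a.1 j).map W.subtype else (b.1 (j - w)).comap W.mkQ,
    fun j l hjl => by
      beta_reduce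
      split_ifs with hj hl hl
      · exact Submodule.map_mono (a.monotone hjl)
      · exact (Submodule.map_subtype_le W _).trans (Submodule.le_comap_mkQ W _)
      · omega
      · exact Submodule.comap_mono (b.monotone (by omega)),
    fun j hj => by
      beta_reduce
      by_cases hjw : j ≤ w
      · rw [if_pos hjw, Submodule.finrank_map_subtype_eq, a.finrank_apply hjw]
      · rw [if_neg hjw, Submodule.finrank_comap_mkQ, b.finrank_apply (by omega), hW]
        omega,
    fun j hj => by
      have hwm : w ≤ m := hV ▸ hW ▸ Submodule.finrank_le W
      beta_reduce
      split_ifs with hjw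
      · rw [a.apply_of_le (by omega), Submodule.map_top, Submodule.range_subtype]
        exact Submodule.eq_top_of_finrank_eq (by omega)
      · rw [b.apply_of_le (by omega), Submodule.comap_top]⟩

theorem glue_apply_self (a : Chamber K W w) (b : Chamber K (V ⧸ W) (m - w))
    (hW : finrank K W = w) (hV : finrank K V = m) : (glue a b hW hV).1 w = W := by
  simp only [glue, le_refl, if_true, a.apply_of_le le_rfl, Submodule.map_top,
    Submodule.range_subtype]

def splitEquiv (hW : finrank K W = w) (hV : finrank K V = m) :
    {C : Chamber K V m // C.1 w = W} ≃ Chamber K W w × Chamber K (V ⧸ W) (m - w) where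
  toFun C := (C.1.restrict C.2 hW, C.1.quotient C.2 hW)
  invFun ab := ⟨glue ab.1 ab.2 hW hV, glue_apply_self ab.1 ab.2 hW hV⟩
  left_inv := by
    rintro ⟨C, hC⟩
    refine Subtype.ext (Subtype.ext (funext fun j => ?_))
    simp only [glue, restrict, quotient]
    split_ifs with hjw
    · rw [Submodule.map_comap_subtype, inf_eq_right.mpr (hC ▸ C.monotone hjw)]
    · rw [Nat.add_sub_cancel' (by omega), Submodule.comap_map_mkQ,
        sup_eq_right.mpr (hC ▸ C.monotone (by omega))]
  right_inv := by
    rintro ⟨a, b⟩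
    refine Prod.ext (Subtype.ext (funext fun j => ?_)) (Subtype.ext (funext fun j => ?_))
    · simp only [glue, restrict]
      split_ifs with hjw
      · exact Submodule.comap_map_eq_of_injective W.injective_subtype _
      · rw [Submodule.comap_subtype_eq_top.mpr (Submodule.le_comap_mkQ W _),
          a.apply_of_le (by omega)]
    · simp only [glue, quotient]
      split_ifs with hjw
      · obtain rfl : j = 0 := by omega
        rw [b.apply_zero, a.apply_of_le (by omega), Submodule.map_top, Submodule.range_subtype,
          Submodule.mkQ_map_self]
      · rw [Nat.add_sub_cancel_left, Submodule.map_comap_eq_of_surjective W.mkQ_surjective]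

theorem card_apply_eq_and_comap_and_map (hW : finrank K W = w) (hV : finrank K V = m)
    (Q : Submodule K W → Prop) (t : ℕ) (R : Submodule K (V ⧸ W) → Prop) (j : ℕ) :
    Nat.card {C : Chamber K V m //
        C.1 w = W ∧ Q ((C.1 t).comap W.subtype) ∧ R ((C.1 (w + j)).map W.mkQ)} =
      Nat.card {a : Chamber K W w // Q (a.1 t)} *
        Nat.card {b : Chamber K (V ⧸ W) (m - w) // R (b.1 j)} := by
  rw [← Nat.card_prod]
  exact Nat.card_congr <|
    ((Equiv.subtypeSubtypeEquivSubtypeInter _ _).symm.trans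
      (Equiv.subtypeEquiv (splitEquiv hW hV) fun _ => Iff.rfl)).trans
    Equiv.subtypeProdEquivProd

theorem card_apply_eq (hW : finrank K W = w) (hV : finrank K V = m) :
    Nat.card {C : Chamber K V m // C.1 w = W} =
      Nat.card (Chamber K W w) * Nat.card (Chamber K (V ⧸ W) (m - w)) := by
  simpa using card_apply_eq_and_comap_and_map hW hV (fun _ => True) 0 (fun _ => True) 0

theorem card_apply_eq_and_not_le_below (hW : finrank K W = w)
    (hV : finrank K V = m) (hPW : P ≤ W) (t : ℕ) :
    Nat.card {C : Chamber K V m // C.1 w = W ∧ ¬ P ≤ C.1 t} =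
      Nat.card {a : Chamber K W w // ¬ P.comap W.subtype ≤ a.1 t} *
        Nat.card (Chamber K (V ⧸ W) (m - w)) := by
  simpa [Submodule.comap_subtype_le_comap_subtype_iff hPW] using
    card_apply_eq_and_comap_and_map hW hV (fun X => ¬ P.comap W.subtype ≤ X) t (fun _ => True) 0

theorem card_apply_eq_and_above (hW : finrank K W = w) (hV : finrank K V = m)
    (R : Submodule K (V ⧸ W) → Prop) (j : ℕ) :
    Nat.card {C : Chamber K V m // C.1 w = W ∧ R ((C.1 (w + j)).map W.mkQ)} =
      Nat.card (Chamber K W w) * Nat.card {b : Chamber K (V ⧸ W) (m - w) // R (b.1 j)} := by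
  simpa using card_apply_eq_and_comap_and_map hW hV (fun _ => True) 0 R j

theorem card_apply_eq_and_le_above (hW : finrank K W = w) (hV : finrank K V = m)
    (hwk : w ≤ k) :
    Nat.card {C : Chamber K V m // C.1 w = W ∧ P ≤ C.1 k} =
      Nat.card (Chamber K W w) *
        Nat.card {b : Chamber K (V ⧸ W) (m - w) // P.map W.mkQ ≤ b.1 (k - w)} := by
  rw [← card_apply_eq_and_above hW hV (P.map W.mkQ ≤ ·), Nat.add_sub_cancel' hwk]
  exact Nat.card_congr (Equiv.subtypeEquivRight fun C => and_congr_right fun hC =>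
    (Submodule.map_mkQ_le_map_mkQ_iff (hC ▸ C.monotone hwk)).symm)

theorem card_apply_eq_and_not_le_above (hW : finrank K W = w) (hV : finrank K V = m)
    (hwk : w ≤ k) :
    Nat.card {C : Chamber K V m // C.1 w = W ∧ ¬ P ≤ C.1 k} =
      Nat.card (Chamber K W w) *
        Nat.card {b : Chamber K (V ⧸ W) (m - w) // ¬ P.map W.mkQ ≤ b.1 (k - w)} := by
  rw [← card_apply_eq_and_above hW hV (¬ P.map W.mkQ ≤ ·), Nat.add_sub_cancel' hwk]
  exact Nat.card_congr (Equiv.subtypeEquivRight fun C => and_congr_right fun hC =>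
    not_congr (Submodule.map_mkQ_le_map_mkQ_iff (hC ▸ C.monotone hwk)).symm)

end Chamber

section Points
variable {K : Type*} [Field K] {V : Type*} [AddCommGroup V] [Module K V]

theorem card_finrank_eq_one [Finite K] {m : ℕ}
    (hV : finrank K V = m) :
    Nat.card {L : Submodule K V // finrank K L = 1} = qAnalog (Nat.card K) m :=
  (Nat.card_congr (Projectivization.equivSubmodule K V)).symm.trans
    (Projectivization.card_of_finrank K V hV)

theorem card_isCompl [FiniteDimensional K V] (S : Submodule K V) :
    Nat.card {W // IsCompl S W} = Nat.card K ^ (finrank K (V ⧸ S) * finrank K S) := by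
  obtain ⟨T, hT⟩ := S.exists_isCompl
  set f₀ := S.projectionOnto T hT
  have hf₀ (x : S) : f₀ x = x := Submodule.projectionOnto_apply_left hT x
  -- projections onto `S` form a torsor under the maps killing `S`, i.e. under `V ⧸ S →ₗ S`
  let e : {f : V →ₗ[K] S // ∀ x : S, f x = x} ≃ ((V ⧸ S) →ₗ[K] S) :=
    { toFun f := S.liftQ (f.1 - f₀) fun x hx => by
        simp [f.2 ⟨x, hx⟩, hf₀ ⟨x, hx⟩]
      invFun g := ⟨f₀ + g ∘ₗ S.mkQ, fun x => by
        simp [hf₀, (Submodule.Quotient.mk_eq_zero S).mpr x.2]⟩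
      left_inv f := Subtype.ext (by ext; simp)
      right_inv g := Submodule.linearMap_qext _ (by ext; simp) }
  rw [Nat.card_congr (S.isComplEquivProj.trans e), Module.natCard_eq_pow_finrank (K := K),
    Module.finrank_linearMap (R := K) (S := K)]

end Points

section Counting
variable {K : Type*} [Field K] [Finite K] {V : Type u} [AddCommGroup V] [Module K V]
  [FiniteDimensional K V]

theorem card_chamber {m : ℕ} (hV : finrank K V = m) :
    Nat.card (Chamber K V m) = qFactorial (Nat.card K) m := by
  induction m generalizing V with
  | zero => exact Chamber.card_eq_one_of_le_one (Nat.zero_le 1) hV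
  | succ m ih =>
    let _ := Fintype.ofFinite {L : Submodule K V // finrank K L = 1}
    have hfiber (L : {L : Submodule K V // finrank K L = 1}) :
        Nat.card {C : Chamber K V (m + 1) // C.1 1 = L.1 ∧ True} = qFactorial (Nat.card K) m := by
      simp only [and_true]
      rw [Chamber.card_apply_eq L.2 hV, Chamber.card_eq_one_of_le_one le_rfl L.2, one_mul]
      exact ih (by rw [Submodule.finrank_quotient, hV, L.2]; rfl)
    rw [← Nat.card_congr (Equiv.subtypeUnivEquiv fun (_ : Chamber K V (m + 1)) => trivial),
      card_subtype_eq_sum_card_fiber (fun C : Chamber K V (m + 1) => C.1 1)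
        (r := fun L : Submodule K V => finrank K L = 1) fun C _ => C.finrank_apply (by omega),
      sum_congr rfl fun L _ => hfiber L, sum_const, card_univ, ← Nat.card_eq_fintype_card,
      card_finrank_eq_one hV, smul_eq_mul, qFactorial_succ, mul_comm]

theorem card_not_le_apply_succ [Fintype {L : Submodule K V // finrank K L = 1}] {m : ℕ}
    (hV : finrank K V = m + 1) {P : Submodule K V} (hP : finrank K P = 1) (t : ℕ) :
    Nat.card {C : Chamber K V (m + 1) // ¬ P ≤ C.1 (t + 1)} =
      ∑ L : {L : Submodule K V // finrank K L = 1}, if L = ⟨P, hP⟩ then 0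
        else Nat.card {b : Chamber K (V ⧸ L.1) m // ¬ P.map L.1.mkQ ≤ b.1 t} := by
  rw [card_subtype_eq_sum_card_fiber (fun C : Chamber K V (m + 1) => C.1 1)
    (r := fun L : Submodule K V => finrank K L = 1) fun C _ => C.finrank_apply (by omega)]
  refine sum_congr rfl fun L _ => ?_
  split_ifs with hLP
  · subst hLP
    have : IsEmpty {C : Chamber K V (m + 1) // C.1 1 = P ∧ ¬ P ≤ C.1 (t + 1)} :=
      ⟨fun C => C.2.2 (C.2.1.symm.le.trans (C.1.monotone (by omega)))⟩
    exact Nat.card_of_isEmpty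
  · rw [Chamber.card_apply_eq_and_not_le_above L.2 hV (by omega),
      Chamber.card_eq_one_of_le_one le_rfl L.2, one_mul, Nat.add_sub_cancel, Nat.add_sub_cancel]

theorem card_not_le_apply_mul {m : ℕ} (hV : finrank K V = m) {P : Submodule K V}
    (hP : finrank K P = 1) (t : ℕ) :
    Nat.card {C : Chamber K V m // ¬ P ≤ C.1 t} * qAnalog (Nat.card K) m =
      Nat.card K ^ t * qFactorial (Nat.card K) m * qAnalog (Nat.card K) (m - t) := by
  have hPatom := Submodule.isAtom_iff_finrank_eq_one.mpr hP
  induction t generalizing V m P with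
  | zero =>
    have hall (C : Chamber K V m) : ¬ P ≤ C.1 0 := by
      rw [C.apply_zero, le_bot_iff]; exact hPatom.ne_bot
    rw [Nat.card_congr (Equiv.subtypeUnivEquiv hall), card_chamber hV, pow_zero, one_mul,
      Nat.sub_zero]
  | succ t ih =>
    rcases le_or_gt m (t + 1) with hmt | htm
    · have : IsEmpty {C : Chamber K V m // ¬ P ≤ C.1 (t + 1)} :=
        ⟨fun C => C.2 (C.1.apply_of_le hmt ▸ le_top)⟩
      simp [Nat.sub_eq_zero_of_le hmt, qAnalog]
    obtain ⟨m, rfl⟩ : ∃ m', m = m' + 1 := ⟨m - 1, by omega⟩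
    let _ := Fintype.ofFinite {L : Submodule K V // finrank K L = 1}
    set q := Nat.card K
    have hterm (L : {L : Submodule K V // finrank K L = 1}) :
        (if L = ⟨P, hP⟩ then 0
          else Nat.card {b : Chamber K (V ⧸ L.1) m // ¬ P.map L.1.mkQ ≤ b.1 t}) * qAnalog q m =
          if L = ⟨P, hP⟩ then 0 else q ^ t * qFactorial q m * qAnalog q (m - t) := by
      split_ifs with hLP
      · rw [zero_mul]
      · have hdisj : Disjoint L.1 P := (Submodule.isAtom_iff_finrank_eq_one.mpr L.2).disjoint_of_ne
          hPatom fun h => hLP (Subtype.ext h)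
        have hPL : finrank K (P.map L.1.mkQ) = 1 := by
          rw [Submodule.finrank_map_mkQ_of_disjoint hdisj, hP]
        exact ih (by rw [Submodule.finrank_quotient, hV, L.2]; rfl) hPL
          (Submodule.isAtom_iff_finrank_eq_one.mpr hPL)
    -- the `q [m]_q` points other than `P` each contribute the same count
    have hcard : Nat.card {C : Chamber K V (m + 1) // ¬ P ≤ C.1 (t + 1)} * qAnalog q m =
        q ^ (t + 1) * qFactorial q m * qAnalog q (m - t) * qAnalog q m := by
      rw [card_not_le_apply_succ hV hP t, sum_mul, sum_congr rfl fun L _ => hterm L, sum_ite,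
        sum_const_zero, zero_add, sum_const, filter_ne', card_erase_of_mem (mem_univ _),
        card_univ, ← Nat.card_eq_fintype_card, card_finrank_eq_one hV, qAnalog_succ,
        Nat.add_sub_cancel, smul_eq_mul]
      ring
    rw [Nat.eq_of_mul_eq_mul_right (qAnalog_pos (by omega : 0 < m)) hcard, qFactorial_succ,
      Nat.add_sub_add_right]
    ring

theorem card_le_apply_mul {m : ℕ} (hV : finrank K V = m) {P : Submodule K V}
    (hP : finrank K P = 1) {t : ℕ} (ht : t ≤ m) :
    Nat.card {C : Chamber K V m // P ≤ C.1 t} * qAnalog (Nat.card K) m =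
      qFactorial (Nat.card K) m * qAnalog (Nat.card K) t := by
  have hsplit : Nat.card {C : Chamber K V m // P ≤ C.1 t} +
      Nat.card {C : Chamber K V m // ¬ P ≤ C.1 t} = qFactorial (Nat.card K) m := by
    rw [← Nat.card_sum, Nat.card_congr (Equiv.sumCompl _), card_chamber hV]
  have hm : qAnalog (Nat.card K) m =
      qAnalog (Nat.card K) t + Nat.card K ^ t * qAnalog (Nat.card K) (m - t) := by
    rw [← qAnalog_add, Nat.add_sub_cancel' ht]
  apply Nat.add_right_cancel (m := Nat.card {C : Chamber K V m // ¬ P ≤ C.1 t} *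
    qAnalog (Nat.card K) m)
  rw [← add_mul, hsplit, card_not_le_apply_mul hV hP t, hm]
  ring

variable {S P : Submodule K V} {m s : ℕ}

theorem card_apply_eq_and_not_le_mul (hV : finrank K V = m) (hS : finrank K S = s)
    (hP : finrank K P = 1) (hPS : P ≤ S) (t : ℕ) :
    Nat.card {C : Chamber K V m // C.1 s = S ∧ ¬ P ≤ C.1 t} * qAnalog (Nat.card K) s =
      Nat.card K ^ t * qFactorial (Nat.card K) s * qAnalog (Nat.card K) (s - t) *
        qFactorial (Nat.card K) (m - s) := by
  have hP' : finrank K (P.comap S.subtype) = 1 := by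
    rw [(Submodule.comapSubtypeEquivOfLe hPS).finrank_eq, hP]
  rw [Chamber.card_apply_eq_and_not_le_below hS hV hPS,
    card_chamber (by rw [Submodule.finrank_quotient, hV, hS]), mul_right_comm,
    card_not_le_apply_mul hS hP' t]

theorem card_inf_eq_bot_and_le_mul (hV : finrank K V = m) (hS : finrank K S = s)
    (hP : finrank K P = 1) (hPS : P ≤ S) {k : ℕ} (hk : k ≤ m) :
    Nat.card {C : Chamber K V m // S ⊓ C.1 (m - s) = ⊥ ∧ P ≤ C.1 k} *
        qAnalog (Nat.card K) s =
      Nat.card K ^ (s * (m - s)) * qFactorial (Nat.card K) (m - s) * qFactorial (Nat.card K) s *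
        qAnalog (Nat.card K) (k - (m - s)) := by
  have hsm : s ≤ m := hV ▸ hS ▸ Submodule.finrank_le S
  have hPbot : P ≠ ⊥ := (Submodule.isAtom_iff_finrank_eq_one.mpr hP).ne_bot
  rcases lt_or_ge k (m - s) with hk' | hk'
  · have : IsEmpty {C : Chamber K V m // S ⊓ C.1 (m - s) = ⊥ ∧ P ≤ C.1 k} :=
      ⟨fun C => hPbot (eq_bot_iff.mpr
        (C.2.1 ▸ le_inf hPS (C.2.2.trans (C.1.monotone hk'.le))))⟩
    simp [Nat.sub_eq_zero_of_le hk'.le, qAnalog]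
  let _ := Fintype.ofFinite {W // IsCompl S W}
  have hfiber (W : {W // IsCompl S W}) :
      Nat.card
          {C : Chamber K V m // C.1 (m - s) = W.1 ∧ S ⊓ C.1 (m - s) = ⊥ ∧ P ≤ C.1 k} *
        qAnalog (Nat.card K) s =
      qFactorial (Nat.card K) (m - s) * qFactorial (Nat.card K) s *
        qAnalog (Nat.card K) (k - (m - s)) := by
    have hW : finrank K W.1 = m - s := by
      have := Submodule.finrank_add_eq_of_isCompl W.2; omega
    have hWq : finrank K (V ⧸ W.1) = s := by
      rw [Submodule.finrank_quotient, hV, hW]; omega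
    have hdisj : Disjoint W.1 P := W.2.disjoint.symm.mono_right hPS
    rw [Nat.card_congr (Equiv.subtypeEquivRight fun C => and_congr_right fun hC => by
        rw [hC, ← disjoint_iff, and_iff_right W.2.disjoint]),
      Chamber.card_apply_eq_and_le_above hW hV hk', card_chamber hW, mul_assoc,
      Nat.sub_sub_self hsm, card_le_apply_mul hWq
        (by rw [Submodule.finrank_map_mkQ_of_disjoint hdisj, hP]) (by omega), mul_assoc]
  rw [card_subtype_eq_sum_card_fiber (fun C : Chamber K V m => C.1 (m - s))
      (r := fun W => IsCompl S W) fun C hC => ?_, sum_mul, sum_congr rfl fun W _ => hfiber W,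
    sum_const, card_univ, ← Nat.card_eq_fintype_card, card_isCompl,
    Submodule.finrank_quotient, hV, hS, smul_eq_mul, mul_comm (m - s)]
  · ring
  · exact (Submodule.isCompl_iff_disjoint S _
      (by rw [hV, hS, C.finrank_apply (Nat.sub_le m s)]; omega)).mpr (disjoint_iff.mpr hC.1)

end Counting

theorem antidesign_mul_chi_eq {K V : Type*} [Field K] [AddCommGroup V] [Module K V]
    {S P : Submodule K V} {n s : ℕ} (hsn : s ≤ n) (hP : P ≠ ⊥) (hPS : P ≤ S)
    (C : Chamber K V (2 * n)) (i : ℕ) (a b : ℚ) :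
    (if C.1 s = S then a else if S ⊓ C.1 (2 * n - s) = ⊥ then 1 else 0) *
        (if P ≤ C.1 n ∧ ¬ P ≤ C.1 (n - i) then b
          else if P ≤ C.1 (n + i) ∧ ¬ P ≤ C.1 n then -1 else 0) =
      a * b * (if C.1 s = S ∧ ¬ P ≤ C.1 (n - i) then 1 else 0) -
        (if S ⊓ C.1 (2 * n - s) = ⊥ ∧ P ≤ C.1 (n + i) then 1 else 0) := by
  have hPn (h : S ⊓ C.1 (2 * n - s) = ⊥) : ¬ P ≤ C.1 n := fun hPn =>
    hP (eq_bot_iff.mpr (h ▸ le_inf hPS (hPn.trans (C.monotone (by omega)))))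
  by_cases hCS : C.1 s = S
  · have hPC : P ≤ C.1 n := hPS.trans (hCS ▸ C.monotone hsn)
    have hSC : S ⊓ C.1 (2 * n - s) ≠ ⊥ := fun h => hPn h hPC
    by_cases hPi : P ≤ C.1 (n - i) <;> simp [hCS, hPC, hSC, hPi]
  · by_cases hSC : S ⊓ C.1 (2 * n - s) = ⊥
    · by_cases hPi : P ≤ C.1 (n + i) <;> simp [hCS, hSC, hPn hSC, hPi]
    · simp [hCS, hSC]

theorem subspace_antidesign_orthogonal_general (q n s : ℕ) (hsn : s ≤ n)
    (K V : Type*) [Field K] [Fintype K]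
    [AddCommGroup V] [Module K V] [FiniteDimensional K V]
    (hK : Fintype.card K = q) (hV : Module.finrank K V = 2 * n)
    [Fintype (Chamber K V (2 * n))]
    (S : Submodule K V) (hSdim : Module.finrank K S = s)
    (P : Submodule K V) (hP : Module.finrank K P = 1) (hPS : P ≤ S)
    (i : ℕ) (hin : i ≤ n) :
    ∑ C : Chamber K V (2 * n),
        (if C.1 s = S then ((q : ℚ) ^ (s * (2 * n - s) - n))
          else if S ⊓ C.1 (2 * n - s) = ⊥ then 1 else 0) *
          (if P ≤ C.1 n ∧ ¬ P ≤ C.1 (n - i) then (q : ℚ) ^ i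
            else if P ≤ C.1 (n + i) ∧ ¬ P ≤ C.1 n then -1 else 0) = 0 := by
  have hs1 : 1 ≤ s := hSdim ▸ hP ▸ Submodule.finrank_mono hPS
  rw [← Nat.card_eq_fintype_card] at hK
  subst hK
  simp_rw [antidesign_mul_chi_eq hsn (Submodule.isAtom_iff_finrank_eq_one.mpr hP).ne_bot hPS,
    sum_sub_distrib, ← mul_sum, sum_boole, ← Fintype.card_subtype, ← Nat.card_eq_fintype_card]
  have hA := card_apply_eq_and_not_le_mul hV hSdim hP hPS (n - i)
  have hB := card_inf_eq_bot_and_le_mul hV hSdim hP hPS (k := n + i) (by omega)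
  rw [show n + i - (2 * n - s) = s - (n - i) by omega] at hB
  have hexp : (Nat.card K : ℚ) ^ (s * (2 * n - s) - n) * Nat.card K ^ i * Nat.card K ^ (n - i) =
      Nat.card K ^ (s * (2 * n - s)) := by
    have : n ≤ s * (2 * n - s) :=
      (show n ≤ 2 * n - s by omega).trans (Nat.le_mul_of_pos_left _ hs1)
    rw [← pow_add, ← pow_add]
    congr 1
    omega
  refine mul_right_cancel₀ (b := (qAnalog (Nat.card K) s : ℚ))
    (Nat.cast_ne_zero.mpr (qAnalog_pos hs1).ne') ?_
  have hA' := congrArg (Nat.cast (R := ℚ)) hA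
  have hB' := congrArg (Nat.cast (R := ℚ)) hB
  push_cast at hA' hB'
  linear_combination (Nat.card K : ℚ) ^ (s * (2 * n - s) - n) * Nat.card K ^ i * hA' - hB' +
    (qFactorial (Nat.card K) s * qAnalog (Nat.card K) (s - (n - i)) *
      qFactorial (Nat.card K) (2 * n - s) : ℚ) * hexp

/-- for `1 ≤ s ≤ n`, an `s`-subspace `S` and a `1`-subspace `P ≤ S`,
the function `v_S` is orthogonal to `χ^i_P` for every `i ∈ {1,…,n}`. -/
theorem subspace_antidesign_orthogonal (q n s : ℕ) (hs1 : 1 ≤ s) (hsn : s ≤ n)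
    (K V : Type*) [Field K] [Fintype K]
    [AddCommGroup V] [Module K V] [FiniteDimensional K V]
    (hK : Fintype.card K = q) (hV : Module.finrank K V = 2 * n)
    [Fintype (Chamber K V (2 * n))]
    (S : Submodule K V) (hSdim : Module.finrank K S = s)
    (P : Submodule K V) (hP : Module.finrank K P = 1) (hPS : P ≤ S)
    (i : ℕ) (hi1 : 1 ≤ i) (hin : i ≤ n) :
    ∑ C : Chamber K V (2 * n),
        (if C.1 s = S then ((q : ℚ) ^ (s * (2 * n - s) - n))
          else if S ⊓ C.1 (2 * n - s) = ⊥ then 1 else 0) *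
          (if P ≤ C.1 n ∧ ¬ P ≤ C.1 (n - i) then (q : ℚ) ^ i
            else if P ≤ C.1 (n + i) ∧ ¬ P ≤ C.1 n then -1 else 0) = 0 :=
  subspace_antidesign_orthogonal_general q n s hsn K V hK hV S hSdim P hP hPS i hin
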